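/- Reduction of SAT to continuous optimization (weighted): let c_1,…,c_m be Boolean functions on n variables, let w_1,…,w_m be strictly positive real weights, and let F(x) = Σ_{j=1}^m w_j · WFE_{c_j}(x). Then F(x) ≤ Σ_{j=1}^m w_j for all x ∈ [−1,1]^n, and the formula f = c_1 ∧ … ∧ c_m is satisfiable if and only if there exists a ∈ [−1,1]^n with F(a) = Σ_{j=1}^m w_j (i.e., the maximum of F over [−1,1]^n equals Σ_j w_j). -/

import Mathlib

/-!
At a point `a` of the cube, the multilinear extension is an expectation:
`WFE g a = ∑ b, g b * roundProb a b`, where `roundProb a` is the product distribution rounding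
coordinate `i` to `-1` with probability `(1 - a i) / 2`; at a vertex `toPM b` it is the point
mass at `b`. So each `WFE (bval (c j))` is at most `1` on the cube, and with positive weights the
maximum `∑ j, w j` forces every `c j` to hold on the whole (nonempty) support of `roundProb a`.
-/

open Finset

/-- Map a Bool vector to a ±1 real vector: `true` (logical True) ↦ -1, `false` ↦ 1. -/
noncomputable def toPM {n : ℕ} (b : Fin n → Bool) : Fin n → ℝ :=
  fun i => if b i then -1 else 1

/-- Walsh–Fourier coefficient ĝ(S) = 2^{-n} · Σ_{b∈{-1,1}^n} g(b) · ∏_{i∈S} b_i. -/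
noncomputable def wfCoeff {n : ℕ} (g : (Fin n → Bool) → ℝ) (S : Finset (Fin n)) : ℝ :=
  (2 ^ n : ℝ)⁻¹ * ∑ b : Fin n → Bool, g b * ∏ i ∈ S, toPM b i

/-- Walsh–Fourier expansion (multilinear extension) of g. -/
noncomputable def WFE {n : ℕ} (g : (Fin n → Bool) → ℝ) (x : Fin n → ℝ) : ℝ :=
  ∑ S : Finset (Fin n), wfCoeff g S * ∏ i ∈ S, x i

/-- Real {0,1} value of a Boolean function (1 = True). -/
noncomputable def bval {n : ℕ} (c : (Fin n → Bool) → Bool) : (Fin n → Bool) → ℝ :=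
  fun b => if c b then 1 else 0

/-- Rounding distribution S_a(b) = ∏_{b_i = -1} (1-a_i)/2 · ∏_{b_i = +1} (1+a_i)/2. -/
noncomputable def roundProb {n : ℕ} (a : Fin n → ℝ) (b : Fin n → Bool) : ℝ :=
  ∏ i, if b i then (1 - a i) / 2 else (1 + a i) / 2

/-- Circuit-output probability COP(P,c). -/
noncomputable def COP {n : ℕ} (P : Fin n → ℝ) (c : (Fin n → Bool) → Bool) : ℝ :=
  ∑ b : Fin n → Bool, bval c b * ∏ i, (if b i then P i else 1 - P i)

section RoundingDistribution

variable {n : ℕ}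

lemma toPM_mem_Icc (b : Fin n → Bool) (i : Fin n) : toPM b i ∈ Set.Icc (-1 : ℝ) 1 := by
  unfold toPM; split <;> norm_num

lemma roundProb_eq_inv_pow_mul_prod (x : Fin n → ℝ) (b : Fin n → Bool) :
    roundProb x b = (2 ^ n : ℝ)⁻¹ * ∏ i, (1 + toPM b i * x i) := by
  have hcoord : ∀ i, (if b i then (1 - x i) / 2 else (1 + x i) / 2) =
      (1 + toPM b i * x i) / 2 := fun i => by
    unfold toPM; split <;> ring
  rw [roundProb, prod_congr rfl fun i _ => hcoord i, prod_div_distrib, prod_const, card_univ,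
    Fintype.card_fin, div_eq_inv_mul]

lemma WFE_eq_sum_mul_roundProb (g : (Fin n → Bool) → ℝ) (x : Fin n → ℝ) :
    WFE g x = ∑ b, g b * roundProb x b := by
  simp only [WFE, wfCoeff, roundProb_eq_inv_pow_mul_prod, prod_one_add, powerset_univ,
    prod_mul_distrib, mul_sum, sum_mul]
  rw [sum_comm]
  exact sum_congr rfl fun b _ => sum_congr rfl fun S _ => by ring

lemma roundProb_nonneg {x : Fin n → ℝ} (hx : ∀ i, x i ∈ Set.Icc (-1 : ℝ) 1)
    (b : Fin n → Bool) : 0 ≤ roundProb x b :=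
  prod_nonneg fun i _ => by
    obtain ⟨h₁, h₂⟩ := hx i
    split <;> linarith

lemma sum_roundProb (x : Fin n → ℝ) : ∑ b, roundProb x b = 1 := by
  unfold roundProb
  rw [← Fintype.prod_sum fun i (t : Bool) =>
    if t then (1 - x i) / 2 else (1 + x i) / 2]
  refine prod_eq_one fun i _ => ?_
  simp only [Fintype.sum_bool, if_true, Bool.false_eq_true, if_false]
  ring

lemma roundProb_toPM (b b' : Fin n → Bool) :
    roundProb (toPM b) b' = if b' = b then 1 else 0 := by
  have hcoord : ∀ s t : Bool, (if s then (1 - (if t then -1 else 1)) / 2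
      else (1 + (if t then -1 else 1)) / 2 : ℝ) = if s = t then 1 else 0 := by
    intro s t; cases s <;> cases t <;> norm_num
  simp only [roundProb, toPM, hcoord, prod_boole, mem_univ, true_implies, funext_iff]

lemma exists_roundProb_ne_zero (x : Fin n → ℝ) : ∃ b, roundProb x b ≠ 0 := by
  obtain ⟨b, -, hb⟩ := exists_ne_zero_of_sum_ne_zero (s := univ) (f := roundProb x)
    (by rw [sum_roundProb]; exact one_ne_zero)
  exact ⟨b, hb⟩

lemma WFE_toPM (g : (Fin n → Bool) → ℝ) (b : Fin n → Bool) : WFE g (toPM b) = g b := by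
  simp [WFE_eq_sum_mul_roundProb, roundProb_toPM]

variable {g : (Fin n → Bool) → ℝ} {M : ℝ} {x : Fin n → ℝ}

lemma WFE_le (hg : ∀ b, g b ≤ M) (hx : ∀ i, x i ∈ Set.Icc (-1 : ℝ) 1) : WFE g x ≤ M :=
  calc WFE g x = ∑ b, g b * roundProb x b := WFE_eq_sum_mul_roundProb g x
    _ ≤ ∑ b, M * roundProb x b :=
      sum_le_sum fun b _ => mul_le_mul_of_nonneg_right (hg b) (roundProb_nonneg hx b)
    _ = M := by rw [← mul_sum, sum_roundProb, mul_one]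

lemma apply_eq_of_WFE_eq (hg : ∀ b, g b ≤ M) (hx : ∀ i, x i ∈ Set.Icc (-1 : ℝ) 1)
    (hmax : WFE g x = M) {b : Fin n → Bool} (hb : roundProb x b ≠ 0) : g b = M := by
  have hgap : ∑ b', (M - g b') * roundProb x b' = 0 := by
    simp only [sub_mul, sum_sub_distrib, ← mul_sum, sum_roundProb, ← WFE_eq_sum_mul_roundProb,
      hmax, mul_one, sub_self]
  have hgap_b := (sum_eq_zero_iff_of_nonneg fun b' _ =>
    mul_nonneg (sub_nonneg.2 (hg b')) (roundProb_nonneg hx b')).1 hgap b (mem_univ b)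
  exact (sub_eq_zero.1 ((mul_eq_zero.1 hgap_b).resolve_right hb)).symm

end RoundingDistribution

lemma bval_le_one {n : ℕ} (c : (Fin n → Bool) → Bool) (b : Fin n → Bool) : bval c b ≤ 1 := by
  unfold bval; split <;> norm_num

lemma bval_eq_one_iff {n : ℕ} {c : (Fin n → Bool) → Bool} {b : Fin n → Bool} :
    bval c b = 1 ↔ c b = true := by
  unfold bval; split <;> simp_all

lemma sum_mul_le_sum_of_le_one {ι : Type*} (s : Finset ι) {w f : ι → ℝ}
    (hw : ∀ j ∈ s, 0 ≤ w j) (hf : ∀ j ∈ s, f j ≤ 1) : ∑ j ∈ s, w j * f j ≤ ∑ j ∈ s, w j :=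
  sum_le_sum fun j hj => mul_le_of_le_one_right (hw j hj) (hf j hj)

lemma sum_mul_eq_sum_iff_of_le_one {ι : Type*} (s : Finset ι) {w f : ι → ℝ}
    (hw : ∀ j ∈ s, 0 < w j) (hf : ∀ j ∈ s, f j ≤ 1) :
    ∑ j ∈ s, w j * f j = ∑ j ∈ s, w j ↔ ∀ j ∈ s, f j = 1 :=
  (sum_eq_sum_iff_of_le fun j hj => mul_le_of_le_one_right (hw j hj).le (hf j hj)).trans
    (forall₂_congr fun j hj => mul_eq_left₀ (hw j hj).ne')

/-- Reduction of SAT to continuous optimization (weighted). -/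
theorem sat_iff_max_weighted {n m : ℕ} (c : Fin m → (Fin n → Bool) → Bool)
    (w : Fin m → ℝ) (hw : ∀ j, 0 < w j) :
    (∀ x : Fin n → ℝ, (∀ i, x i ∈ Set.Icc (-1 : ℝ) 1) →
      ∑ j, w j * WFE (bval (c j)) x ≤ ∑ j, w j) ∧
    ((∃ b : Fin n → Bool, ∀ j, c j b = true) ↔
      ∃ a : Fin n → ℝ, (∀ i, a i ∈ Set.Icc (-1 : ℝ) 1) ∧
        ∑ j, w j * WFE (bval (c j)) a = ∑ j, w j) := by
  have hle : ∀ x : Fin n → ℝ, (∀ i, x i ∈ Set.Icc (-1 : ℝ) 1) →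
      ∀ j ∈ univ, WFE (bval (c j)) x ≤ 1 :=
    fun x hx j _ => WFE_le (bval_le_one (c j)) hx
  have hmax_iff := fun x hx => sum_mul_eq_sum_iff_of_le_one _ (fun j _ => hw j) (hle x hx)
  refine ⟨fun x hx => sum_mul_le_sum_of_le_one _ (fun j _ => (hw j).le) (hle x hx), ?_, ?_⟩
  · rintro ⟨b, hb⟩
    refine ⟨toPM b, toPM_mem_Icc b, (hmax_iff _ (toPM_mem_Icc b)).2 fun j _ => ?_⟩
    rw [WFE_toPM, bval_eq_one_iff, hb j]
  · rintro ⟨a, ha, hmax⟩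
    obtain ⟨b, hb⟩ := exists_roundProb_ne_zero a
    have hone := (hmax_iff a ha).1 hmax
    exact ⟨b, fun j => bval_eq_one_iff.1
      (apply_eq_of_WFE_eq (bval_le_one (c j)) ha (hone j (mem_univ j)) hb)⟩
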